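/- For m a positive half-integer and s a half-integer, Φ^{[m,s]}(2τ, z₁, z₂, t) = (1/2){ Φ^{[2m,2s]}(τ, z₁/2, z₂/2, t/2) + e^{−2πis} Φ^{[2m,2s]}(τ, (z₁+1)/2, (z₂−1)/2, t/2) }. -/

import Mathlib

open Real Complex Filter Topology

noncomputable section

noncomputable def Phi1 (m s : ℝ) (τ z1 z2 t : ℂ) : ℂ :=
  Complex.exp (-2*(π:ℂ)*Complex.I*(m:ℂ)*t) *
    ∑' j : ℤ,
      Complex.exp (2*(π:ℂ)*Complex.I*((m:ℂ)*(j:ℂ)*(z1+z2) + (s:ℂ)*z1)) *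
        Complex.exp (2*(π:ℂ)*Complex.I*τ*((m:ℂ)*(j:ℂ)^2 + (s:ℂ)*(j:ℂ))) /
        (1 - Complex.exp (2*(π:ℂ)*Complex.I*z1) * Complex.exp (2*(π:ℂ)*Complex.I*τ) ^ j)

noncomputable def Phi2 (m s : ℝ) (τ z1 z2 t : ℂ) : ℂ :=
  Complex.exp (-2*(π:ℂ)*Complex.I*(m:ℂ)*t) *
    ∑' j : ℤ,
      Complex.exp (-(2*(π:ℂ)*Complex.I)*((m:ℂ)*(j:ℂ)*(z1+z2) + (s:ℂ)*z2)) *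
        Complex.exp (2*(π:ℂ)*Complex.I*τ*((m:ℂ)*(j:ℂ)^2 + (s:ℂ)*(j:ℂ))) /
        (1 - Complex.exp (-(2*(π:ℂ)*Complex.I)*z2) * Complex.exp (2*(π:ℂ)*Complex.I*τ) ^ j)

noncomputable def Phi (m s : ℝ) (τ z1 z2 t : ℂ) : ℂ :=
  Phi1 m s τ z1 z2 t - Phi2 m s τ z1 z2 t

/-!
Both `Phi1` and `Phi2` are sums of terms `N_j / (1 - x_j²)`, where `x_j = e^{πi z₁} q^j` for
`Phi1` and `x_j = e^{-πi z₂} q^j` for `Phi2` (here `q = e^{2πiτ}`, so that `q² = e^{2πi·2τ}`).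
Passing to the half variables `z₁/2`, `z₂/2` turns the denominator into `1 - x_j`, and the shift
`z₁ ↦ z₁ + 1`, `z₂ ↦ z₂ - 1` turns it into `1 + x_j`, multiplying the numerator by `e^{2πis}`,
which the factor `e^{-2πis}` cancels. The theorem is thus the partial fraction decomposition
`1/(1 - x²) = ½ (1/(1 - x) + 1/(1 + x))`, applied termwise; all series converge absolutely as
theta series with bounded denominators, because `m > 0` and `Im τ > 0`.
-/

/-- The common shape of the summands of `Phi1` (`c = 2πi`, `z = z1`) and `Phi2` (`c = -2πi`,
`z = z2`), with `w = z1 + z2`. -/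
def appellTerm (c : ℂ) (m s : ℝ) (τ w z : ℂ) (j : ℤ) : ℂ :=
  Complex.exp (c*((m:ℂ)*(j:ℂ)*w + (s:ℂ)*z)) *
    Complex.exp (2*(π:ℂ)*Complex.I*τ*((m:ℂ)*(j:ℂ)^2 + (s:ℂ)*(j:ℂ))) /
    (1 - Complex.exp (c*z) * Complex.exp (2*(π:ℂ)*Complex.I*τ) ^ j)

def appellSum (c : ℂ) (m s : ℝ) (τ w z : ℂ) : ℂ :=
  ∑' j : ℤ, appellTerm c m s τ w z j

lemma Phi1_eq_appellSum (m s : ℝ) (τ z1 z2 t : ℂ) :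
    Phi1 m s τ z1 z2 t =
      Complex.exp (-2*(π:ℂ)*Complex.I*(m:ℂ)*t) *
        appellSum (2*(π:ℂ)*Complex.I) m s τ (z1 + z2) z1 :=
  rfl

lemma Phi2_eq_appellSum (m s : ℝ) (τ z1 z2 t : ℂ) :
    Phi2 m s τ z1 z2 t =
      Complex.exp (-2*(π:ℂ)*Complex.I*(m:ℂ)*t) *
        appellSum (-(2*(π:ℂ)*Complex.I)) m s τ (z1 + z2) z2 :=
  rfl

lemma eventually_norm_inv_one_sub_mul_zpow_le_two {q : ℂ} (hq0 : q ≠ 0) (hq1 : ‖q‖ < 1)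
    (u : ℂ) : ∀ᶠ j : ℤ in cofinite, ‖1 - u * q ^ j‖⁻¹ ≤ 2 := by
  have hq0' : 0 < ‖q‖ := norm_pos_iff.mpr hq0
  have hnorm : ∀ j : ℤ, ‖u * q ^ j‖ = ‖u‖ * ‖q‖ ^ (j:ℝ) := fun j => by
    rw [norm_mul, norm_zpow, Real.rpow_intCast]
  have inv_le_two : ∀ x : ℂ, ‖x‖ ≤ 1/2 ∨ 2 ≤ ‖x‖ → ‖1 - x‖⁻¹ ≤ 2 := by
    intro x hx
    refine inv_le_of_inv_le₀ two_pos ?_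
    rcases hx with hx | hx
    · linarith [norm_sub_norm_le (1:ℂ) x, norm_one (α := ℂ)]
    · linarith [norm_sub_norm_le x 1, norm_sub_rev x 1, norm_one (α := ℂ)]
  rw [Int.cofinite_eq, eventually_sup]
  constructor
  · rcases eq_or_ne u 0 with rfl | hu
    · exact Eventually.of_forall fun j => by norm_num
    have hgrow : Tendsto (fun j : ℤ => ‖u * q ^ j‖) atBot atTop := by
      refine Tendsto.congr (fun j => (hnorm j).symm) ?_
      exact ((tendsto_rpow_atBot_of_base_lt_one _ hq0' hq1).comp
        (tendsto_intCast_atBot_iff.mpr tendsto_id)).const_mul_atTop (norm_pos_iff.mpr hu)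
    filter_upwards [hgrow.eventually_ge_atTop 2] with j hj
    exact inv_le_two _ (Or.inr hj)
  · have hdecay : Tendsto (fun j : ℤ => ‖u * q ^ j‖) atTop (𝓝 0) := by
      refine Tendsto.congr (fun j => (hnorm j).symm) ?_
      rw [← mul_zero ‖u‖]
      exact ((tendsto_rpow_atTop_of_base_lt_one _ (by linarith [norm_nonneg q]) hq1).comp
        tendsto_intCast_atTop_atTop).const_mul ‖u‖
    filter_upwards [hdecay.eventually_le_const one_half_pos] with j hj
    exact inv_le_two _ (Or.inl hj)

lemma summable_appellTerm (c : ℂ) {m : ℝ} (hm : 0 < m) (s : ℝ) {τ : ℂ} (hτ : 0 < τ.im)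
    (w z : ℂ) : Summable (appellTerm c m s τ w z) := by
  set θ : ℤ → ℂ := fun j => Complex.exp (c*(s:ℂ)*z) *
    jacobiTheta₂_term j (c*(m:ℂ)*w/(2*(π:ℂ)*Complex.I) + (s:ℂ)*τ) (2*(m:ℂ)*τ)
  have hθ : Summable θ := by
    refine ((summable_jacobiTheta₂_term_iff _ _).mpr ?_).mul_left _
    simpa [Complex.mul_im] using mul_pos (mul_pos two_pos hm) hτ
  have hq : ‖Complex.exp (2*(π:ℂ)*Complex.I*τ)‖ < 1 := by
    rw [Complex.norm_exp, Real.exp_lt_one_iff]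
    simpa [Complex.mul_re] using mul_pos (mul_pos two_pos Real.pi_pos) hτ
  have hnum : ∀ j : ℤ, Complex.exp (c*((m:ℂ)*(j:ℂ)*w + (s:ℂ)*z)) *
      Complex.exp (2*(π:ℂ)*Complex.I*τ*((m:ℂ)*(j:ℂ)^2 + (s:ℂ)*(j:ℂ))) = θ j := fun j => by
    simp only [θ, jacobiTheta₂_term, ← Complex.exp_add]
    congr 1
    field_simp [Complex.ofReal_ne_zero.mpr Real.pi_ne_zero, Complex.I_ne_zero]
    ring
  refine .of_norm_bounded_eventually (hθ.norm.mul_left 2) ?_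
  filter_upwards [eventually_norm_inv_one_sub_mul_zpow_le_two (Complex.exp_ne_zero _) hq
    (Complex.exp (c*z))] with j hj
  rw [appellTerm, hnum, norm_div, div_eq_mul_inv, mul_comm]
  exact mul_le_mul_of_nonneg_right hj (norm_nonneg _)

lemma div_one_sub_sq_eq_half_add {x : ℂ} (hx : x ^ 2 ≠ 1) (N : ℂ) :
    N / (1 - x ^ 2) = 1/2 * (N / (1 - x) + N / (1 + x)) := by
  have h1 : 1 - x ≠ 0 := fun h => hx (by linear_combination (-(1 + x)) * h)
  have h2 : 1 + x ≠ 0 := fun h => hx (by linear_combination (x - 1) * h)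
  have h3 : 1 - x ^ 2 ≠ 0 := sub_ne_zero.mpr (Ne.symm hx)
  field_simp
  ring

lemma appellTerm_two_mul {c δ : ℂ} (hcδ : c * δ = π * Complex.I) (m s : ℝ) (τ w z : ℂ) (j : ℤ)
    (hD : Complex.exp (c*z) * Complex.exp (2*(π:ℂ)*Complex.I*(2*τ)) ^ j ≠ 1) :
    appellTerm c m s (2*τ) w z j =
      1/2 * (appellTerm c (2*m) (2*s) τ (w/2) (z/2) j +
        Complex.exp (-(2*(π:ℂ)*Complex.I)*(s:ℂ)) * appellTerm c (2*m) (2*s) τ (w/2) (z/2 + δ) j) := by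
  unfold appellTerm
  set q := Complex.exp (2*(π:ℂ)*Complex.I*τ)
  set x := Complex.exp (c*(z/2)) * q ^ j
  set N := Complex.exp (c*((m:ℂ)*(j:ℂ)*w + (s:ℂ)*z)) *
    Complex.exp (2*(π:ℂ)*Complex.I*(2*τ)*((m:ℂ)*(j:ℂ)^2 + (s:ℂ)*(j:ℂ)))
  have hsq : Complex.exp (c*z) * Complex.exp (2*(π:ℂ)*Complex.I*(2*τ)) ^ j = x ^ 2 := by
    have hz : Complex.exp (c*z) = Complex.exp (c*(z/2)) ^ 2 := by
      rw [← Complex.exp_nat_mul]; congr 1; push_cast; ring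
    have hq : Complex.exp (2*(π:ℂ)*Complex.I*(2*τ)) = q ^ 2 := by
      rw [← Complex.exp_nat_mul]; congr 1; push_cast; ring
    rw [hz, hq, mul_pow, ← zpow_natCast q 2, ← zpow_natCast (q ^ j) 2, ← zpow_mul, ← zpow_mul,
      mul_comm j]
  have hneg : Complex.exp (c*(z/2 + δ)) * q ^ j = -x := by
    rw [mul_add, hcδ, Complex.exp_add, Complex.exp_pi_mul_I]
    ring
  have hnum : Complex.exp (c*(((2*m:ℝ):ℂ)*(j:ℂ)*(w/2) + ((2*s:ℝ):ℂ)*(z/2))) *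
      Complex.exp (2*(π:ℂ)*Complex.I*τ*(((2*m:ℝ):ℂ)*(j:ℂ)^2 + ((2*s:ℝ):ℂ)*(j:ℂ))) = N := by
    congr 2 <;> push_cast <;> ring
  have hnum' : Complex.exp (-(2*(π:ℂ)*Complex.I)*(s:ℂ)) *
      (Complex.exp (c*(((2*m:ℝ):ℂ)*(j:ℂ)*(w/2) + ((2*s:ℝ):ℂ)*(z/2 + δ))) *
        Complex.exp (2*(π:ℂ)*Complex.I*τ*(((2*m:ℝ):ℂ)*(j:ℂ)^2 + ((2*s:ℝ):ℂ)*(j:ℂ)))) = N := by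
    rw [← hnum, ← mul_assoc, ← Complex.exp_add]
    congr 2
    push_cast
    linear_combination (2 * (s:ℂ)) * hcδ
  rw [hsq] at hD ⊢
  rw [hneg, hnum, mul_div_assoc', hnum', sub_neg_eq_add]
  exact div_one_sub_sq_eq_half_add hD N

lemma appellSum_two_mul {c δ : ℂ} (hcδ : c * δ = π * Complex.I) {m : ℝ} (hm : 0 < m) (s : ℝ)
    {τ : ℂ} (hτ : 0 < τ.im) (w z : ℂ)
    (hD : ∀ j : ℤ, Complex.exp (c*z) * Complex.exp (2*(π:ℂ)*Complex.I*(2*τ)) ^ j ≠ 1) :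
    appellSum c m s (2*τ) w z =
      1/2 * (appellSum c (2*m) (2*s) τ (w/2) (z/2) +
        Complex.exp (-(2*(π:ℂ)*Complex.I)*(s:ℂ)) * appellSum c (2*m) (2*s) τ (w/2) (z/2 + δ)) := by
  have h2m : 0 < 2 * m := by positivity
  unfold appellSum
  rw [tsum_congr fun j => appellTerm_two_mul hcδ m s τ w z j (hD j), tsum_mul_left,
    Summable.tsum_add (summable_appellTerm c h2m _ hτ _ _)
      ((summable_appellTerm c h2m _ hτ _ _).mul_left _), tsum_mul_left]

theorem stmt6_general (m s : ℝ) (hm : ∃ n : ℕ, 0 < n ∧ m = (n : ℝ) / 2)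
    (τ z1 z2 t : ℂ) (hτ : 0 < τ.im)
    (h1 : ∀ j : ℤ, Complex.exp (2*(π:ℂ)*Complex.I*z1) * Complex.exp (2*(π:ℂ)*Complex.I*(2*τ)) ^ j ≠ 1)
    (h2 : ∀ j : ℤ, Complex.exp (-(2*(π:ℂ)*Complex.I)*z2) * Complex.exp (2*(π:ℂ)*Complex.I*(2*τ)) ^ j ≠ 1) :
    Phi m s (2*τ) z1 z2 t =
      (1/2) * (Phi (2*m) (2*s) τ (z1/2) (z2/2) (t/2) +
        Complex.exp (-(2*(π:ℂ)*Complex.I)*(s:ℂ)) * Phi (2*m) (2*s) τ ((z1+1)/2) ((z2-1)/2) (t/2)) := by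
  obtain ⟨n, hn, rfl⟩ := hm
  have hm0 : 0 < (n:ℝ) / 2 := by positivity
  have hprefactor : Complex.exp (-2*(π:ℂ)*Complex.I*((2*((n:ℝ)/2):ℝ):ℂ)*(t/2)) =
      Complex.exp (-2*(π:ℂ)*Complex.I*(((n:ℝ)/2:ℝ):ℂ)*t) := by
    congr 1; push_cast; ring
  simp only [Phi, Phi1_eq_appellSum, Phi2_eq_appellSum]
  rw [appellSum_two_mul (δ := 1/2) (by ring) hm0 s hτ _ _ h1,
    appellSum_two_mul (δ := -1/2) (by ring) hm0 s hτ _ _ h2,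
    show z1/2 + z2/2 = (z1 + z2)/2 by ring, show (z1+1)/2 + (z2-1)/2 = (z1 + z2)/2 by ring,
    show (z1+1)/2 = z1/2 + 1/2 by ring, show (z2-1)/2 = z2/2 + -1/2 by ring, hprefactor]
  ring

theorem stmt6 (m s : ℝ) (hm : ∃ n : ℕ, 0 < n ∧ m = (n : ℝ) / 2)
    (hs : ∃ k : ℤ, s = (k : ℝ) / 2)
    (τ z1 z2 t : ℂ) (hτ : 0 < τ.im)
    (h1 : ∀ j : ℤ, Complex.exp (2*(π:ℂ)*Complex.I*z1) * Complex.exp (2*(π:ℂ)*Complex.I*(2*τ)) ^ j ≠ 1)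
    (h2 : ∀ j : ℤ, Complex.exp (-(2*(π:ℂ)*Complex.I)*z2) * Complex.exp (2*(π:ℂ)*Complex.I*(2*τ)) ^ j ≠ 1)
    (h3 : ∀ j : ℤ, Complex.exp (2*(π:ℂ)*Complex.I*(z1/2)) * Complex.exp (2*(π:ℂ)*Complex.I*τ) ^ j ≠ 1)
    (h4 : ∀ j : ℤ, Complex.exp (-(2*(π:ℂ)*Complex.I)*(z2/2)) * Complex.exp (2*(π:ℂ)*Complex.I*τ) ^ j ≠ 1)
    (h5 : ∀ j : ℤ, Complex.exp (2*(π:ℂ)*Complex.I*((z1+1)/2)) * Complex.exp (2*(π:ℂ)*Complex.I*τ) ^ j ≠ 1)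
    (h6 : ∀ j : ℤ, Complex.exp (-(2*(π:ℂ)*Complex.I)*((z2-1)/2)) * Complex.exp (2*(π:ℂ)*Complex.I*τ) ^ j ≠ 1) :
    Phi m s (2*τ) z1 z2 t =
      (1/2) * (Phi (2*m) (2*s) τ (z1/2) (z2/2) (t/2) +
        Complex.exp (-(2*(π:ℂ)*Complex.I)*(s:ℂ)) * Phi (2*m) (2*s) τ ((z1+1)/2) ((z2-1)/2) (t/2)) :=
  stmt6_general m s hm τ z1 z2 t hτ h1 h2
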